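/- Let B : Fin m → Fin m → ℝ be antisymmetric and satisfy the three-index Plucker condition: for all i,j,k,l the antisymmetrization over (i,j,k) of B i j * B k l vanishes (B_{[ij}B_{k]l} = 0). Suppose a, b : Fin m → ℝ satisfy Σ_{i,j} B i j * a i * b j = 1. Define u i = Σ_j B i j * a j and v i = Σ_j B i j * b j. Then B i j = u i * v j − v i * u j for all i, j; in particular B is simple. -/
import Mathlib


open Finset

/-- Antisymmetrization of a 3-index expression over its three index slots. -/
noncomputable def alt3 {m : ℕ} (T : Fin m → Fin m → Fin m → ℝ)
    (i j k : Fin m) : ℝ :=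
  (1 / 6 : ℝ) * ∑ σ : Equiv.Perm (Fin 3),
    ((Equiv.Perm.sign σ : ℤ) : ℝ) *
      T (![i, j, k] (σ 0)) (![i, j, k] (σ 1)) (![i, j, k] (σ 2))

lemma sum_perm3 (f : Equiv.Perm (Fin 3) → ℝ) :
    ∑ σ : Equiv.Perm (Fin 3), f σ =
      f 1 + f (Equiv.swap 0 1) + f (Equiv.swap 0 2) + f (Equiv.swap 1 2)
        + f (Equiv.swap 0 1 * Equiv.swap 1 2) + f (Equiv.swap 1 2 * Equiv.swap 0 1) := by
  rw [show (Finset.univ : Finset (Equiv.Perm (Fin 3))) =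
    {1, Equiv.swap 0 1, Equiv.swap 0 2, Equiv.swap 1 2,
     Equiv.swap 0 1 * Equiv.swap 1 2, Equiv.swap 1 2 * Equiv.swap 0 1} from by decide]
  rw [Finset.sum_insert (by decide), Finset.sum_insert (by decide),
      Finset.sum_insert (by decide), Finset.sum_insert (by decide),
      Finset.sum_insert (by decide), Finset.sum_singleton]
  ring

lemma plucker_expand (m : ℕ) (B : Fin m → Fin m → ℝ)
    (hB : ∀ i j, B i j = - B j i)
    (hpl : ∀ i j k l, alt3 (fun a b c => B a b * B c l) i j k = 0)
    (i j k l : Fin m) :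
    B i j * B k l + B j k * B i l + B k i * B j l = 0 := by
  have h := hpl i j k l
  unfold alt3 at h
  rw [sum_perm3] at h
  simp only [Equiv.Perm.sign_one, Equiv.Perm.sign_swap (by decide : (0:Fin 3) ≠ 1),
    Equiv.Perm.sign_swap (by decide : (0:Fin 3) ≠ 2),
    Equiv.Perm.sign_swap (by decide : (1:Fin 3) ≠ 2),
    Equiv.Perm.sign_mul, Equiv.Perm.one_apply, Equiv.Perm.mul_apply,
    show (Equiv.swap (0:Fin 3) 1) 0 = 1 from by decide,
    show (Equiv.swap (0:Fin 3) 1) 1 = 0 from by decide,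
    show (Equiv.swap (0:Fin 3) 1) 2 = 2 from by decide,
    show (Equiv.swap (0:Fin 3) 2) 0 = 2 from by decide,
    show (Equiv.swap (0:Fin 3) 2) 1 = 1 from by decide,
    show (Equiv.swap (0:Fin 3) 2) 2 = 0 from by decide,
    show (Equiv.swap (1:Fin 3) 2) 0 = 0 from by decide,
    show (Equiv.swap (1:Fin 3) 2) 1 = 2 from by decide,
    show (Equiv.swap (1:Fin 3) 2) 2 = 1 from by decide,
    Matrix.cons_val_zero, Matrix.cons_val_one, Matrix.head_cons,
    Matrix.cons_val_two, Matrix.tail_cons] at h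
  push_cast at h
  have h1 := hB j i
  have h2 := hB i k
  have h3 := hB k j
  linear_combination 3*h + (1/2)*B k l*h1 + (1/2)*B i l*h3 + (1/2)*B j l*h2

/-- An antisymmetric `B` satisfying the three-index Plucker condition `B_{[ij}B_{k]l} = 0`
factorizes: with `B_{ij} a^i b^j = 1`, `u_i = B_{ij}a^j`, `v_i = B_{ij}b^j`, one has
`B i j = u i * v j − v i * u j`; in particular `B` is simple. -/
theorem three_index_plucker_implies_simple (m : ℕ) (B : Fin m → Fin m → ℝ)
    (hB : ∀ i j, B i j = - B j i)
    (hpl : ∀ i j k l, alt3 (fun a b c => B a b * B c l) i j k = 0)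
    (a b : Fin m → ℝ) (hab : ∑ i, ∑ j, B i j * a i * b j = 1)
    (u v : Fin m → ℝ)
    (hu : ∀ i, u i = ∑ j, B i j * a j)
    (hv : ∀ i, v i = ∑ j, B i j * b j) :
    (∀ i j, B i j = u i * v j - v i * u j) ∧
      ∃ p q : Fin m → ℝ, ∀ i j, B i j = p i * q j - q i * p j := by
  have main : ∀ i j, B i j = u i * v j - v i * u j := by
    intro i j
    have h0 : ∑ k, ∑ l, (B i j * B k l + B j k * B i l + B k i * B j l) * (a k * b l) = 0 := by
      apply Finset.sum_eq_zero
      intro k _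
      apply Finset.sum_eq_zero
      intro l _
      rw [plucker_expand m B hB hpl i j k l, zero_mul]
    have e1 : ∑ k, ∑ l, B i j * (B k l * a k * b l) = B i j := by
      simp_rw [← Finset.mul_sum]
      rw [hab, mul_one]
    have e2 : ∑ k, ∑ l, (B j k * a k) * (B i l * b l) = u j * v i := by
      rw [hu j, hv i, Finset.sum_mul_sum]
    have e3 : ∑ k, ∑ l, (B k i * a k) * (B j l * b l) = (∑ k, B k i * a k) * v j := by
      rw [hv j, Finset.sum_mul_sum]
    have e4 : (∑ k, B k i * a k) = - u i := by
      rw [hu i, ← Finset.sum_neg_distrib]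
      exact Finset.sum_congr rfl fun k _ => by rw [hB k i]; ring
    have expand : ∑ k, ∑ l, (B i j * B k l + B j k * B i l + B k i * B j l) * (a k * b l)
        = (∑ k, ∑ l, B i j * (B k l * a k * b l))
          + (∑ k, ∑ l, (B j k * a k) * (B i l * b l))
          + (∑ k, ∑ l, (B k i * a k) * (B j l * b l)) := by
      rw [← Finset.sum_add_distrib, ← Finset.sum_add_distrib]
      apply Finset.sum_congr rfl
      intro k _
      rw [← Finset.sum_add_distrib, ← Finset.sum_add_distrib]
      apply Finset.sum_congr rfl
      intro l _
      ring
    rw [expand, e1, e2, e3, e4] at h0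
    linarith [h0]
  exact ⟨main, u, v, main⟩
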